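/- arXiv:1706.01494 — 2 statements merged into one kernel-verified Lean document; each statement's English description precedes it below -/
import Mathlib

section
/- At the planar reference configuration with v2'(1)=0, v3'(2π/3)=0, the symmetric energy E(λ,α1,α2) = 2v2(λ) + (1/2)v2(3/2 + λcos α1) + (1/2)v2(3/2 + λcos α2) + 2v3(α1) + 2v3(α2) + v3(β(α1,π)) + v3(β(α2,π)) with β(α,γ)=2 arcsin(sin α sin(γ/2)) satisfies: the second derivative ∂²E/∂α1² at (1, 2π/3, 2π/3) equals (3/8)v2''(1) + 6v3''(2π/3). -/
/-!
For `α ∈ [π/2, 3π/2]` one has `arcsin (sin α) = π - α`, so near `α1 = 2π/3` the angle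
`β(α1, π) = 2π - 2α1` is affine and `E` is a sum of compositions of `v2`, `v3` with elementary
functions, whose second derivative is given by the chain rule. At `α1 = 2π/3` we have
`3/2 + cos α1 = 1`, `sin² α1 = 3/4` and `2π - 2α1 = α1`, so the `v3''` terms combine to
`(2 + 2²) v3''` and the `v2'(1)` term vanishes.
-/

open Real

noncomputable def β (α γ : ℝ) : ℝ := 2 * Real.arcsin (Real.sin α * Real.sin (γ / 2))

noncomputable def Esym (v2 v3 : ℝ → ℝ) (lam α1 α2 : ℝ) : ℝ :=
  2 * v2 lam + (1 / 2) * v2 (3 / 2 + lam * Real.cos α1)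
    + (1 / 2) * v2 (3 / 2 + lam * Real.cos α2)
    + 2 * v3 α1 + 2 * v3 α2 + v3 (β α1 π) + v3 (β α2 π)

open Filter Topology Set

lemma β_pi_of_mem_Icc {α : ℝ} (hα : α ∈ Icc (π / 2) (3 * π / 2)) : β α π = 2 * π - 2 * α := by
  have : arcsin (sin α) = π - α := by
    rw [← sin_pi_sub, arcsin_sin] <;> linarith [hα.1, hα.2]
  simp only [β, sin_pi_div_two, mul_one, this]
  ring

lemma Esym_eventuallyEq_of_mem_Ioo (v2 v3 : ℝ → ℝ) (lam α2 : ℝ) {a : ℝ}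
    (ha : a ∈ Ioo (π / 2) (3 * π / 2)) :
    (Esym v2 v3 lam · α2) =ᶠ[𝓝 a] fun α1 => 2 * v2 lam + (1 / 2) * v2 (3 / 2 + lam * cos α1)
      + (1 / 2) * v2 (3 / 2 + lam * cos α2) + 2 * v3 α1 + 2 * v3 α2 + v3 (2 * π - 2 * α1)
      + v3 (β α2 π) :=
  eventually_of_mem (isOpen_Ioo.mem_nhds ha) fun α1 h => by
    simp only [Esym, β_pi_of_mem_Icc (Ioo_subset_Icc_self h)]

lemma iteratedDeriv_two_comp_const_add_mul_cos {v : ℝ → ℝ} (hv : ContDiff ℝ 2 v) (c m x : ℝ) :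
    iteratedDeriv 2 (fun α => v (c + m * cos α)) x =
      iteratedDeriv 2 v (c + m * cos x) * (m * sin x) ^ 2
        - deriv v (c + m * cos x) * (m * cos x) := by
  have hd : deriv (fun α => c + m * cos α) x = -(m * sin x) := by simp
  have hd2 : iteratedDeriv 2 (fun α => c + m * cos α) x = -(m * cos x) := by
    simp [iteratedDeriv_const_add]
  rw [show (fun α => v (c + m * cos α)) = v ∘ (fun α => c + m * cos α) from rfl,
    iteratedDeriv_comp_two hv.contDiffAt (by fun_prop), hd, hd2]
  ring

lemma iteratedDeriv_two_comp_const_sub_mul {v : ℝ → ℝ} (hv : ContDiff ℝ 2 v) (c m x : ℝ) :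
    iteratedDeriv 2 (fun α => v (c - m * α)) x = m ^ 2 * iteratedDeriv 2 v (c - m * x) := by
  rw [iteratedDeriv_comp_const_mul (f := fun y => v (c - y)) (by fun_prop),
    iteratedDeriv_comp_const_sub]
  norm_num

lemma iteratedDeriv_two_Esym {v2 v3 : ℝ → ℝ} (hv2 : ContDiff ℝ 2 v2) (hv3 : ContDiff ℝ 2 v3)
    (lam α2 : ℝ) {a : ℝ} (ha : a ∈ Ioo (π / 2) (3 * π / 2)) :
    iteratedDeriv 2 (Esym v2 v3 lam · α2) a =
      (1 / 2) * (iteratedDeriv 2 v2 (3 / 2 + lam * cos a) * (lam * sin a) ^ 2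
        - deriv v2 (3 / 2 + lam * cos a) * (lam * cos a))
      + 2 * iteratedDeriv 2 v3 a + 4 * iteratedDeriv 2 v3 (2 * π - 2 * a) := by
  rw [((Esym_eventuallyEq_of_mem_Ioo v2 v3 lam α2 ha).iteratedDeriv 2).eq_of_nhds]
  repeat rw [iteratedDeriv_fun_add (by fun_prop) (by fun_prop)]
  simp only [iteratedDeriv_const_mul_field, iteratedDeriv_const,
    iteratedDeriv_two_comp_const_add_mul_cos hv2, iteratedDeriv_two_comp_const_sub_mul hv3]
  norm_num

theorem second_deriv_alpha1_general (v2 v3 : ℝ → ℝ)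
    (hv2 : ContDiff ℝ 2 v2) (hv3 : ContDiff ℝ 2 v3)
    (hv2' : deriv v2 1 = 0) :
    deriv (deriv (fun α1 => Esym v2 v3 1 α1 (2 * π / 3))) (2 * π / 3)
      = (3 / 8) * deriv (deriv v2) 1 + 6 * deriv (deriv v3) (2 * π / 3) := by
  have hmem : 2 * π / 3 ∈ Ioo (π / 2) (3 * π / 2) := ⟨by linarith [pi_pos], by linarith [pi_pos]⟩
  have hcos : cos (2 * π / 3) = -(1 / 2) := by
    rw [show 2 * π / 3 = π - π / 3 by ring, cos_pi_sub, cos_pi_div_three]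
  have hsin : sin (2 * π / 3) ^ 2 = 3 / 4 := by
    rw [sin_sq, hcos]; norm_num
  have key := iteratedDeriv_two_Esym hv2 hv3 1 (2 * π / 3) hmem
  simp only [iteratedDeriv_succ, iteratedDeriv_zero, one_mul] at key
  rw [key, hcos, show (3 : ℝ) / 2 + -(1 / 2) = 1 by norm_num,
    show 2 * π - 2 * (2 * π / 3) = 2 * π / 3 by ring, hv2']
  linear_combination (1 / 2 * deriv (deriv v2) 1) * hsin

theorem second_deriv_alpha1 (v2 v3 : ℝ → ℝ)
    (hv2 : ContDiff ℝ 2 v2) (hv3 : ContDiff ℝ 2 v3)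
    (hv2' : deriv v2 1 = 0) (hv3' : deriv v3 (2 * π / 3) = 0) :
    deriv (deriv (fun α1 => Esym v2 v3 1 α1 (2 * π / 3))) (2 * π / 3)
      = (3 / 8) * deriv (deriv v2) 1 + 6 * deriv (deriv v3) (2 * π / 3) :=
  second_deriv_alpha1_general v2 v3 hv2 hv3 hv2'
end

section
/- At the planar reference configuration, the symmetric energy E(λ,α1,α2) = 2v2(λ) + (1/2)v2(3/2 + λcos α1) + (1/2)v2(3/2 + λcos α2) + 2v3(α1) + 2v3(α2) + v3(β(α1,π)) + v3(β(α2,π)) with v2'(1)=0 and v3'(2π/3)=0 satisfies: ∂²E/∂λ²(1,2π/3,2π/3) = (9/4)v2''(1) and ∂²E/∂λ∂α1(1,2π/3,2π/3) = (√3/8)v2''(1). -/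
open Real

/-!
Only the three `v2` terms depend on `λ`, so by the chain rule
`∂E/∂λ = 2 v2'(λ) + ½ cos α₁ · v2'(3/2 + λ cos α₁) + ½ cos α₂ · v2'(3/2 + λ cos α₂)`.
At the reference configuration every `v2` argument equals `3/2 + cos (2π/3) = 1`. Differentiating
once more in `λ` gives `(2 + 2 · ½ · ¼) v2''(1) = 9/4 v2''(1)`; differentiating in `α₁` gives
`½ (-sin α₁ cos α₁ v2''(1) - sin α₁ v2'(1)) = √3/8 v2''(1)`,
because `v2'(1) = 0`.
-/

namespace Real

lemma cos_two_pi_div_three : cos (2 * π / 3) = -(1 / 2) := by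
  rw [show 2 * π / 3 = π - π / 3 by ring, cos_pi_sub, cos_pi_div_three]

lemma sin_two_pi_div_three : sin (2 * π / 3) = √3 / 2 := by
  rw [show 2 * π / 3 = π - π / 3 by ring, sin_pi_sub, sin_pi_div_three]

end Real

lemma hasDerivAt_comp_const_add_mul_const {f : ℝ → ℝ} {a b x : ℝ}
    (hf : DifferentiableAt ℝ f (a + x * b)) :
    HasDerivAt (fun l => f (a + l * b)) (deriv f (a + x * b) * b) x := by
  have h : HasDerivAt (fun l => a + l * b) b x := by
    simpa using ((hasDerivAt_id x).mul_const b).const_add a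
  exact hf.hasDerivAt.comp x h

noncomputable def EsymDerivLam (v2 : ℝ → ℝ) (lam α1 α2 : ℝ) : ℝ :=
  2 * deriv v2 lam + 1 / 2 * (deriv v2 (3 / 2 + lam * cos α1) * cos α1)
    + 1 / 2 * (deriv v2 (3 / 2 + lam * cos α2) * cos α2)

section

variable {v2 : ℝ → ℝ}

lemma deriv_Esym_lam (v3 : ℝ → ℝ) (hv2 : Differentiable ℝ v2) (α1 α2 : ℝ) :
    deriv (fun lam => Esym v2 v3 lam α1 α2) = fun lam => EsymDerivLam v2 lam α1 α2 := by
  funext lam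
  exact HasDerivAt.deriv <| (((((((hv2 lam).hasDerivAt.const_mul 2).add
    ((hasDerivAt_comp_const_add_mul_const (hv2 (3 / 2 + lam * cos α1))).const_mul (1 / 2))).add
    ((hasDerivAt_comp_const_add_mul_const (hv2 (3 / 2 + lam * cos α2))).const_mul (1 / 2)))
    |>.add_const (2 * v3 α1)).add_const (2 * v3 α2)).add_const (v3 (β α1 π))).add_const (v3 (β α2 π))

lemma hasDerivAt_EsymDerivLam_lam (hdv2 : Differentiable ℝ (deriv v2)) (lam α1 α2 : ℝ) :
    HasDerivAt (fun l => EsymDerivLam v2 l α1 α2)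
      (2 * deriv (deriv v2) lam
        + 1 / 2 * (deriv (deriv v2) (3 / 2 + lam * cos α1) * cos α1 * cos α1)
        + 1 / 2 * (deriv (deriv v2) (3 / 2 + lam * cos α2) * cos α2 * cos α2)) lam :=
  (((hdv2 lam).hasDerivAt.const_mul 2).add
    (((hasDerivAt_comp_const_add_mul_const (hdv2 _)).mul_const (cos α1)).const_mul (1 / 2))).add
    (((hasDerivAt_comp_const_add_mul_const (hdv2 _)).mul_const (cos α2)).const_mul (1 / 2))

lemma hasDerivAt_EsymDerivLam_α1 (hdv2 : Differentiable ℝ (deriv v2)) (lam α1 α2 : ℝ) :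
    HasDerivAt (fun α => EsymDerivLam v2 lam α α2)
      (1 / 2 * (deriv (deriv v2) (3 / 2 + lam * cos α1) * (lam * -sin α1) * cos α1
        + deriv v2 (3 / 2 + lam * cos α1) * -sin α1)) α1 := by
  have hinner : HasDerivAt (fun α => 3 / 2 + lam * cos α) (lam * -sin α1) α1 :=
    ((hasDerivAt_cos α1).const_mul lam).const_add _
  exact ((((hdv2 _).hasDerivAt.comp α1 hinner).mul (hasDerivAt_cos α1)).const_mul (1 / 2)
    |>.const_add (2 * deriv v2 lam)).add_const
    (1 / 2 * (deriv v2 (3 / 2 + lam * cos α2) * cos α2))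

end

theorem second_derivs_lambda_general (v2 v3 : ℝ → ℝ)
    (hv2 : ContDiff ℝ 2 v2)
    (hv2' : deriv v2 1 = 0) :
    deriv (deriv (fun lam => Esym v2 v3 lam (2 * π / 3) (2 * π / 3))) 1
        = (9 / 4) * deriv (deriv v2) 1 ∧
    deriv (fun α1 => deriv (fun lam => Esym v2 v3 lam α1 (2 * π / 3)) 1) (2 * π / 3)
        = Real.sqrt 3 / 8 * deriv (deriv v2) 1 := by
  have hd : Differentiable ℝ v2 := hv2.differentiable (by norm_num)
  have hdd : Differentiable ℝ (deriv v2) := by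
    simpa only [iteratedDeriv_one] using hv2.differentiable_iteratedDeriv 1 (by norm_num)
  have harg : 3 / 2 + 1 * cos (2 * π / 3) = 1 := by rw [cos_two_pi_div_three]; norm_num
  constructor
  · rw [deriv_Esym_lam v3 hd, (hasDerivAt_EsymDerivLam_lam hdd _ _ _).deriv, harg,
      cos_two_pi_div_three]
    ring
  · simp only [deriv_Esym_lam v3 hd]
    rw [(hasDerivAt_EsymDerivLam_α1 hdd _ _ _).deriv, harg, hv2', cos_two_pi_div_three,
      sin_two_pi_div_three]
    ring

theorem second_derivs_lambda (v2 v3 : ℝ → ℝ)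
    (hv2 : ContDiff ℝ 2 v2) (hv3 : ContDiff ℝ 2 v3)
    (hv2' : deriv v2 1 = 0) (hv3' : deriv v3 (2 * π / 3) = 0) :
    deriv (deriv (fun lam => Esym v2 v3 lam (2 * π / 3) (2 * π / 3))) 1
        = (9 / 4) * deriv (deriv v2) 1 ∧
    deriv (fun α1 => deriv (fun lam => Esym v2 v3 lam α1 (2 * π / 3)) 1) (2 * π / 3)
        = Real.sqrt 3 / 8 * deriv (deriv v2) 1 :=
  second_derivs_lambda_general v2 v3 hv2 hv2'
end
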